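/- arXiv:2004.03035 — 5 statements merged into one kernel-verified Lean document; each statement's English description precedes it below -/
import Mathlib

section
/- Let K be a nonempty closed convex subset of the Euclidean plane E = EuclideanSpace ℝ (Fin 2), and let Y ∈ E be a point with Y ∉ K. Then there exists a point Z ∈ K such that for every X ∈ K, dist(X, Z) < dist(X, Y); that is, Z is strictly closer than Y to every point of K. -/
/-! Take for `Z` the metric projection of `Y` onto `K`. It is characterised by
`⟪Y - Z, X - Z⟫ ≤ 0` for all `X ∈ K`, i.e. the angle of the triangle `XZY` at `Z` is not
acute, so the side `XY` opposite to it is strictly longer than the side `XZ` as soon as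
`Y ≠ Z`. -/

open scoped RealInnerProductSpace

section

variable {F : Type*} [NormedAddCommGroup F] [InnerProductSpace ℝ F]

theorem dist_lt_dist_of_inner_sub_nonpos {X Y Z : F} (h : ⟪Y - Z, X - Z⟫ ≤ 0)
    (hYZ : Y ≠ Z) : dist X Z < dist X Y := by
  have hYZ_pos : 0 < ‖Y - Z‖ := norm_pos_iff.2 (sub_ne_zero.2 hYZ)
  have hsq : ‖X - Z‖ ^ 2 < ‖X - Y‖ ^ 2 :=
    calc ‖X - Z‖ ^ 2
        < ‖X - Z‖ ^ 2 - 2 * ⟪X - Z, Y - Z⟫ + ‖Y - Z‖ ^ 2 := by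
          rw [real_inner_comm]; nlinarith
      _ = ‖X - Y‖ ^ 2 := by
          rw [← norm_sub_sq_real, sub_sub_sub_cancel_right]
  rw [dist_eq_norm, dist_eq_norm]
  exact lt_of_pow_lt_pow_left₀ 2 (norm_nonneg _) hsq

theorem exists_mem_forall_inner_sub_nonpos {K : Set F} (hne : K.Nonempty) (hcomplete : IsComplete K)
    (hconv : Convex ℝ K) (Y : F) : ∃ Z ∈ K, ∀ X ∈ K, ⟪Y - Z, X - Z⟫ ≤ 0 := by
  obtain ⟨Z, hZ, hmin⟩ := exists_norm_eq_iInf_of_complete_convex hne hcomplete hconv Y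
  exact ⟨Z, hZ, (norm_eq_iInf_iff_real_inner_le_zero hconv hZ).1 hmin⟩

end

/-- Witzgall–Hammer: for a point `Y` outside a nonempty closed convex set `K` in the
Euclidean plane there is a point `Z ∈ K` strictly closer than `Y` to every point of `K`. -/
theorem closer_point_in_closed_convex
    (K : Set (EuclideanSpace ℝ (Fin 2))) (hne : K.Nonempty)
    (hclosed : IsClosed K) (hconv : Convex ℝ K)
    (Y : EuclideanSpace ℝ (Fin 2)) (hY : Y ∉ K) :
    ∃ Z ∈ K, ∀ X ∈ K, dist X Z < dist X Y := by
  obtain ⟨Z, hZ, hobtuse⟩ := exists_mem_forall_inner_sub_nonpos hne hclosed.isComplete hconv Y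
  have hYZ : Y ≠ Z := fun h => hY (h ▸ hZ)
  exact ⟨Z, hZ, fun X hX => dist_lt_dist_of_inner_sub_nonpos (hobtuse X hX) hYZ⟩
end

section
/- Fix radii r > 0 and D > 0 and a point a in the Euclidean plane E = EuclideanSpace ℝ (Fin 2). If points z, y ∈ E satisfy dist(a, z) ≤ dist(a, y), then volume(closedBall(a, r) ∩ closedBall(z, D)) ≥ volume(closedBall(a, r) ∩ closedBall(y, D)); that is, the intersection area of the demand disc and the facility's coverage disc is a nonincreasing function of the distance between their centers. -/
/-!
Let `σ` be the reflection in the perpendicular bisector of `z` and `y`: a measure-preserving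
isometry exchanging `z` and `y`. As `a` lies on the side of `z`, `σ` brings every point on the
side of `y` no farther from `a`. Hence `σ` maps the part of the demand disc covered from `y` but
not from `z` into the part covered from `z` but not from `y`, and the two areas compare.
-/

open Metric MeasureTheory

namespace MeasureTheory

theorem measure_le_of_diff_subset_preimage_diff {α : Type*} [MeasurableSpace α] {μ : Measure α}
    {σ : α → α} {S T : Set α} (hσ : MeasurePreserving σ μ μ) (hS : MeasurableSet S)
    (hT : MeasurableSet T) (h : S \ T ⊆ σ ⁻¹' (T \ S)) : μ S ≤ μ T :=
  calc μ S = μ (S ∩ T) + μ (S \ T) := (measure_inter_add_sdiff S hT).symm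
    _ ≤ μ (T ∩ S) + μ (σ ⁻¹' (T \ S)) := by rw [Set.inter_comm]; gcongr
    _ = μ T := by
      rw [hσ.measure_preimage (hT.diff hS).nullMeasurableSet, measure_inter_add_sdiff T hS]

end MeasureTheory

section BisectorReflection

variable {F : Type*} [NormedAddCommGroup F] [InnerProductSpace ℝ F]

open Submodule

theorem inner_sub_sub_midpoint (z y w : F) :
    inner ℝ (y - z) (w - midpoint ℝ z y) = (‖w - z‖ ^ 2 - ‖w - y‖ ^ 2) / 2 := by
  rw [midpoint_eq_smul_add, norm_sub_sq_real, norm_sub_sq_real]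
  simp only [inner_sub_left, inner_sub_right, inner_add_right, real_inner_smul_right,
    real_inner_self_eq_norm_sq, real_inner_comm w z, real_inner_comm w y, real_inner_comm z y,
    invOf_eq_inv]
  ring

theorem inner_reflection_orthogonalComplement_singleton_left (v u b : F) :
    inner ℝ (reflection (ℝ ∙ v)ᗮ u) b
      = inner ℝ u b - 2 * (inner ℝ v u * inner ℝ v b) / ‖v‖ ^ 2 := by
  rw [reflection_orthogonal_apply, reflection_singleton_apply]
  simp only [inner_neg_left, inner_sub_left, two_nsmul, inner_add_left, real_inner_smul_left,
    RCLike.ofReal_real_eq_id, id_eq]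
  ring

theorem norm_reflection_orthogonalComplement_singleton_sub_le {v u b : F}
    (h : inner ℝ v u * inner ℝ v b ≤ 0) :
    ‖reflection (ℝ ∙ v)ᗮ u - b‖ ≤ ‖u - b‖ := by
  have key : inner ℝ u b ≤ inner ℝ (reflection (ℝ ∙ v)ᗮ u) b := by
    rw [inner_reflection_orthogonalComplement_singleton_left]
    have : 2 * (inner ℝ v u * inner ℝ v b) / ‖v‖ ^ 2 ≤ 0 :=
      div_nonpos_of_nonpos_of_nonneg (by linarith) (by positivity)
    linarith
  rw [← sq_le_sq₀ (norm_nonneg _) (norm_nonneg _), norm_sub_sq_real, norm_sub_sq_real,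
    LinearIsometryEquiv.norm_map]
  linarith

noncomputable def bisectorReflection (z y : F) (x : F) : F :=
  reflection (ℝ ∙ (z - y))ᗮ (x - midpoint ℝ z y) + midpoint ℝ z y

theorem bisectorReflection_involutive (z y : F) :
    Function.Involutive (bisectorReflection z y) := fun x => by
  simp [bisectorReflection]

theorem isometry_bisectorReflection (z y : F) : Isometry (bisectorReflection z y) := by
  refine Isometry.of_dist_eq fun x w => ?_
  simp [bisectorReflection, dist_eq_norm, ← map_sub]

theorem bisectorReflection_left (z y : F) : bisectorReflection z y z = y := by
  have h : ‖z - midpoint ℝ z y‖ = ‖y - midpoint ℝ z y‖ := by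
    rw [← dist_eq_norm, ← dist_eq_norm, dist_left_midpoint, dist_right_midpoint, dist_comm]
  have := reflection_sub h
  rw [sub_sub_sub_cancel_right] at this
  rw [bisectorReflection, this, sub_add_cancel]

theorem bisectorReflection_right (z y : F) : bisectorReflection z y y = z := by
  simpa [bisectorReflection_left] using bisectorReflection_involutive z y z

theorem dist_bisectorReflection_le {z y x a : F} (hx : dist x y ≤ dist x z)
    (ha : dist a z ≤ dist a y) : dist (bisectorReflection z y x) a ≤ dist x a := by
  have hx_side : 0 ≤ inner ℝ (y - z) (x - midpoint ℝ z y) := by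
    rw [inner_sub_sub_midpoint, ← dist_eq_norm, ← dist_eq_norm]
    nlinarith [dist_nonneg (x := x) (y := y)]
  have ha_side : inner ℝ (y - z) (a - midpoint ℝ z y) ≤ 0 := by
    rw [inner_sub_sub_midpoint, ← dist_eq_norm, ← dist_eq_norm]
    nlinarith [dist_nonneg (x := a) (y := z)]
  have := norm_reflection_orthogonalComplement_singleton_sub_le (v := z - y)
    (u := x - midpoint ℝ z y) (b := a - midpoint ℝ z y) (by
      rw [← neg_sub y z, inner_neg_left, inner_neg_left]
      nlinarith)
  rwa [sub_sub_sub_cancel_right, sub_sub_eq_add_sub, ← bisectorReflection, ← dist_eq_norm,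
    ← dist_eq_norm] at this

theorem measurePreserving_bisectorReflection [MeasurableSpace F] [BorelSpace F]
    [FiniteDimensional ℝ F] (z y : F) : MeasurePreserving (bisectorReflection z y) :=
  ((measurePreserving_add_right volume _).comp (LinearIsometryEquiv.measurePreserving _)).comp
    (measurePreserving_sub_right volume _)

theorem diff_subset_preimage_bisectorReflection {a z y : F} (ha : dist a z ≤ dist a y)
    (r D : ℝ) :
    (closedBall a r ∩ closedBall y D) \ (closedBall a r ∩ closedBall z D) ⊆
      bisectorReflection z y ⁻¹' ((closedBall a r ∩ closedBall z D) \
        (closedBall a r ∩ closedBall y D)) := by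
  rintro x ⟨⟨hxa, hxy⟩, hxT⟩
  have hxz : D < dist x z := lt_of_not_ge fun hxz => hxT ⟨hxa, hxz⟩
  have hσ := isometry_bisectorReflection z y
  have hσy : dist (bisectorReflection z y x) z = dist x y := by
    rw [← hσ.dist_eq x y, bisectorReflection_right]
  have hσz : dist (bisectorReflection z y x) y = dist x z := by
    rw [← hσ.dist_eq x z, bisectorReflection_left]
  refine ⟨⟨?_, ?_⟩, fun hS => ?_⟩
  · exact (dist_bisectorReflection_le (le_trans hxy hxz.le) ha).trans hxa
  · exact hσy.trans_le hxy
  · exact hxz.not_ge (hσz ▸ hS.2)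

end BisectorReflection

theorem partialCover_antitone_in_dist_general
    (r D : ℝ)
    (a z y : EuclideanSpace ℝ (Fin 2)) (h : dist a z ≤ dist a y) :
    volume (closedBall a r ∩ closedBall z D) ≥
      volume (closedBall a r ∩ closedBall y D) :=
  measure_le_of_diff_subset_preimage_diff (measurePreserving_bisectorReflection z y)
    (measurableSet_closedBall.inter measurableSet_closedBall)
    (measurableSet_closedBall.inter measurableSet_closedBall)
    (diff_subset_preimage_bisectorReflection h r D)

/-- The intersection area of the demand disc and the facility's coverage disc is a
nonincreasing function of the distance between the centers. -/
theorem partialCover_antitone_in_dist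
    (r D : ℝ) (hr : 0 < r) (hD : 0 < D)
    (a z y : EuclideanSpace ℝ (Fin 2)) (h : dist a z ≤ dist a y) :
    volume (closedBall a r ∩ closedBall z D) ≥
      volume (closedBall a r ∩ closedBall y D) :=
  partialCover_antitone_in_dist_general r D a z y h
end

section
/- Let a : Fin n → E (n ≥ 1) be the centers of the demand points in the Euclidean plane E = EuclideanSpace ℝ (Fin 2), let w : Fin n → ℝ be nonnegative weights, and for each i let φ_i : ℝ → ℝ be a nonincreasing function giving the cover of demand point i by a facility at distance d as φ_i(d). Then for every point y ∈ E there exists a point z in the convex hull convexHull ℝ (Set.range a) of the demand points such that ∑ i, w i * φ_i(dist(a i, z)) ≥ ∑ i, w i * φ_i(dist(a i, y)). -/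
open Metric RealInnerProductSpace

/-! The nearest point `v` of the convex hull to `y` sees every point `x` of the hull at an
angle `∠ y v x ≥ π/2`, so `x` is no farther from `v` than from `y`. Since each cover
function is nonincreasing in the distance, moving the facility from `y` to `v` increases no
term of the total cover. -/

section

variable {F : Type*} [NormedAddCommGroup F] [InnerProductSpace ℝ F]

theorem dist_le_dist_of_inner_sub_le_zero {x y v : F} (h : ⟪y - v, x - v⟫ ≤ 0) :
    dist x v ≤ dist x y := by
  have hsq : ‖x - v‖ ^ 2 ≤ ‖x - y‖ ^ 2 := by
    have hxy : x - y = (x - v) - (y - v) := by abel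
    rw [hxy, norm_sub_sq_real (x - v), real_inner_comm]
    nlinarith [sq_nonneg ‖y - v‖]
  rw [dist_eq_norm, dist_eq_norm]
  exact (pow_le_pow_iff_left₀ (norm_nonneg _) (norm_nonneg _) two_ne_zero).mp hsq

theorem Convex.exists_forall_dist_le_dist {K : Set F} (hK : Convex ℝ K) (hne : K.Nonempty)
    (hc : IsComplete K) (y : F) : ∃ v ∈ K, ∀ x ∈ K, dist x v ≤ dist x y := by
  obtain ⟨v, hvK, hmin⟩ := exists_norm_eq_iInf_of_complete_convex hne hc hK y
  have hobtuse := (norm_eq_iInf_iff_real_inner_le_zero hK hvK).mp hmin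
  exact ⟨v, hvK, fun x hx => dist_le_dist_of_inner_sub_le_zero (hobtuse x hx)⟩

end

/-- Lemma 1 (general form): for a distance-based nonincreasing cover function, for every
location `y` there is a point `z` of the convex hull of the demand points providing at
least as much total cover. -/
theorem exists_convexHull_point_better_cover
    (n : ℕ) (hn : 1 ≤ n) (a : Fin n → EuclideanSpace ℝ (Fin 2))
    (w : Fin n → ℝ) (hw : ∀ i, 0 ≤ w i)
    (φ : Fin n → ℝ → ℝ) (hφ : ∀ i, Antitone (φ i))
    (y : EuclideanSpace ℝ (Fin 2)) :
    ∃ z ∈ convexHull ℝ (Set.range a),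
      ∑ i, w i * φ i (dist (a i) z) ≥ ∑ i, w i * φ i (dist (a i) y) := by
  have ha : ∀ i, a i ∈ convexHull ℝ (Set.range a) :=
    fun i => subset_convexHull ℝ _ (Set.mem_range_self i)
  have hc : IsComplete (convexHull ℝ (Set.range a)) :=
    (Set.finite_range a).isCompact_convexHull ℝ |>.isComplete
  obtain ⟨z, hz, hcloser⟩ := (convex_convexHull ℝ (Set.range a)).exists_forall_dist_le_dist
    ⟨_, ha ⟨0, hn⟩⟩ hc y
  refine ⟨z, hz, Finset.sum_le_sum fun i _ => ?_⟩
  exact mul_le_mul_of_nonneg_left (hφ i (hcloser (a i) (ha i))) (hw i)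
end

section
/- Let a : Fin n → E (n ≥ 1) be the centers of the demand points in the Euclidean plane E = EuclideanSpace ℝ (Fin 2), with radii R : Fin n → ℝ, R i > 0, and nonnegative weights w : Fin n → ℝ, and let D > 0 be the cover radius of a single facility. Define the total cover of a facility location y ∈ E as f(y) = ∑ i, w i * (volume(closedBall(a i, R i) ∩ closedBall(y, D))).toReal. Then for every y ∈ E there exists z ∈ convexHull ℝ (Set.range a) with f(z) ≥ f(y); in particular an optimal location of one facility exists in the convex hull of the demand points. -/
/-!
Let `z` be the point of the convex hull nearest to `y`; by the obtuse-angle criterion, `z` is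
at least as close as `y` to every point of the hull, in particular to every center `a i`.
So it suffices to show that moving the facility closer to a center does not decrease its cover
of that disc. The reflection `σ` in the perpendicular bisector of `y` and `z` preserves volume,
swaps the two facility discs, and maps the part of `closedBall a R ∩ closedBall y D` outside
`closedBall z D` into the part of `closedBall a R ∩ closedBall z D` outside `closedBall y D`:
such a point `x` lies on `y`'s side of the bisector and `a` on `z`'s side, so the segment from
`x` to `a` meets the bisector in a fixed point `p` of `σ`, whence
`dist (σ x) a ≤ dist x p + dist p a = dist x a`.
-/

open Metric MeasureTheory EuclideanGeometry AffineSubspace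
open scoped RealInnerProductSpace

variable {E : Type*} [NormedAddCommGroup E] [InnerProductSpace ℝ E]

theorem Convex.exists_mem_forall_dist_le_dist {K : Set E} (hK : Convex ℝ K) (hne : K.Nonempty)
    (hc : IsComplete K) (y : E) : ∃ z ∈ K, ∀ p ∈ K, dist z p ≤ dist y p := by
  obtain ⟨z, hzK, hz⟩ := exists_norm_eq_iInf_of_complete_convex hne hc hK y
  have hobtuse := (norm_eq_iInf_iff_real_inner_le_zero hK hzK).1 hz
  refine ⟨z, hzK, fun p hp => ?_⟩
  have hsq : ‖y - p‖ ^ 2 = ‖y - z‖ ^ 2 - 2 * ⟪y - z, p - z⟫ + ‖z - p‖ ^ 2 := by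
    rw [norm_sub_rev z p, show y - p = (y - z) - (p - z) by abel, norm_sub_sq_real]
  rw [dist_eq_norm, dist_eq_norm,
    ← pow_le_pow_iff_left₀ (norm_nonneg _) (norm_nonneg _) two_ne_zero]
  nlinarith [hobtuse p hp, sq_nonneg ‖y - z‖]

theorem MeasureTheory.MeasurePreserving.measure_le_of_mapsTo_diff {α : Type*} [MeasurableSpace α]
    {μ : Measure α} {σ : α → α} (hσ : MeasurePreserving σ μ μ) {S T : Set α}
    (hS : MeasurableSet S) (hT : MeasurableSet T) (h : Set.MapsTo σ (S \ T) (T \ S)) :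
    μ S ≤ μ T :=
  calc μ S = μ (S ∩ T) + μ (S \ T) := (measure_inter_add_sdiff S hT).symm
    _ ≤ μ (T ∩ S) + μ (T \ S) := by
      rw [Set.inter_comm]
      refine add_le_add_right ?_ _
      calc μ (S \ T) ≤ μ (σ ⁻¹' (T \ S)) := measure_mono h
        _ = μ (T \ S) := hσ.measure_preimage (hT.diff hS).nullMeasurableSet
    _ = μ T := measure_inter_add_sdiff T hS

variable [FiniteDimensional ℝ E]

theorem AffineIsometryEquiv.measurePreserving [MeasurableSpace E] [BorelSpace E]
    (e : E ≃ᵃⁱ[ℝ] E) : MeasurePreserving e := by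
  have he : ⇑e = (· + e 0) ∘ e.linearIsometryEquiv := by
    ext x
    simpa using e.map_vadd 0 x
  rw [he]
  exact (measurePreserving_add_right volume (e 0)).comp e.linearIsometryEquiv.measurePreserving

instance (y z : E) : Nonempty (perpBisector y z) :=
  ⟨⟨midpoint ℝ y z, midpoint_mem_perpBisector y z⟩⟩

theorem reflection_perpBisector_left (y z : E) : reflection (perpBisector y z) y = z := by
  have hv : (2⁻¹ : ℝ) • (y - z) ∈ (perpBisector y z).directionᗮ := by
    rw [direction_perpBisector, Submodule.orthogonal_orthogonal]
    exact Submodule.mem_span_singleton.2 ⟨-2⁻¹, by rw [vsub_eq_sub]; module⟩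
  calc reflection (perpBisector y z) y
      = reflection (perpBisector y z) ((2⁻¹ : ℝ) • (y - z) +ᵥ midpoint ℝ y z) := by
        rw [midpoint_eq_smul_add, invOf_eq_inv, vadd_eq_add]; congr 1; module
    _ = -((2⁻¹ : ℝ) • (y - z)) +ᵥ midpoint ℝ y z :=
        reflection_orthogonal_vadd (midpoint_mem_perpBisector y z) hv
    _ = z := by rw [midpoint_eq_smul_add, invOf_eq_inv, vadd_eq_add]; module

theorem dist_reflection_perpBisector_le {x y z a : E} (hx : dist x y ≤ dist x z)
    (ha : dist a z ≤ dist a y) : dist (reflection (perpBisector y z) x) a ≤ dist x a := by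
  have hcont (q : E) : ContinuousOn (dist · q) (segment ℝ x a) :=
    (continuous_id.dist continuous_const).continuousOn
  obtain ⟨p, hp, hpyz⟩ := (convex_segment x a).isPreconnected.intermediate_value₂
    (left_mem_segment ℝ x a) (right_mem_segment ℝ x a) (hcont y) (hcont z) hx ha
  have hpmem : p ∈ perpBisector y z := mem_perpBisector_iff_dist_eq.2 hpyz
  calc dist (reflection (perpBisector y z) x) a
      ≤ dist (reflection (perpBisector y z) x) p + dist p a := dist_triangle _ _ _
    _ = dist x p + dist p a := by
      rw [dist_comm _ p, dist_reflection_eq_of_mem _ hpmem, dist_comm]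
    _ = dist x a := dist_add_dist_of_mem_segment hp

theorem volume_closedBall_inter_closedBall_le_of_dist_le [MeasurableSpace E] [BorelSpace E]
    {a y z : E} (h : dist z a ≤ dist y a) (R D : ℝ) :
    volume (closedBall a R ∩ closedBall y D) ≤ volume (closedBall a R ∩ closedBall z D) := by
  set σ := reflection (perpBisector y z)
  have hσy : σ y = z := reflection_perpBisector_left y z
  have hσz : σ z = y := by rw [← hσy, reflection_reflection]
  refine σ.measurePreserving.measure_le_of_mapsTo_diff
    (measurableSet_closedBall.inter measurableSet_closedBall)
    (measurableSet_closedBall.inter measurableSet_closedBall) ?_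
  rintro x ⟨⟨hxa, hxy⟩, hxz⟩
  have hxz : D < dist x z := lt_of_not_ge fun h => hxz ⟨hxa, h⟩
  rw [mem_closedBall] at hxa hxy
  refine ⟨⟨?_, ?_⟩, fun ⟨_, hσxy⟩ => ?_⟩
  · have ha : dist a z ≤ dist a y := by rwa [dist_comm a z, dist_comm a y]
    exact (dist_reflection_perpBisector_le (hxy.trans hxz.le) ha).trans hxa
  · rwa [mem_closedBall, ← hσy, σ.dist_map]
  · rw [mem_closedBall, ← hσz, σ.dist_map] at hσxy
    exact hσxy.not_gt hxz

theorem exists_convexHull_point_better_areaCover_general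
    (n : ℕ) (hn : 1 ≤ n) (a : Fin n → EuclideanSpace ℝ (Fin 2))
    (R : Fin n → ℝ)
    (w : Fin n → ℝ) (hw : ∀ i, 0 ≤ w i)
    (D : ℝ)
    (y : EuclideanSpace ℝ (Fin 2)) :
    ∃ z ∈ convexHull ℝ (Set.range a),
      ∑ i, w i * (volume (closedBall (a i) (R i) ∩ closedBall z D)).toReal ≥
        ∑ i, w i * (volume (closedBall (a i) (R i) ∩ closedBall y D)).toReal := by
  obtain ⟨z, hzK, hz⟩ := (convex_convexHull ℝ (Set.range a)).exists_mem_forall_dist_le_dist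
    ⟨a ⟨0, hn⟩, subset_convexHull ℝ _ ⟨_, rfl⟩⟩
    ((Set.finite_range a).isCompact_convexHull (𝕜 := ℝ)).isComplete y
  refine ⟨z, hzK, Finset.sum_le_sum fun i _ => mul_le_mul_of_nonneg_left ?_ (hw i)⟩
  have hfin : volume (closedBall (a i) (R i) ∩ closedBall z D) ≠ ⊤ :=
    ((isCompact_closedBall z D).inter_left isClosed_closedBall).measure_ne_top
  have hzi := hz (a i) (subset_convexHull ℝ _ ⟨i, rfl⟩)
  exact ENNReal.toReal_mono hfin (volume_closedBall_inter_closedBall_le_of_dist_le hzi _ _)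

/-- Lemma 1 specialized to the intersection-area cover model: for every facility location
`y` there is a point `z` of the convex hull of the demand point centers whose total cover
is at least that of `y`. -/
theorem exists_convexHull_point_better_areaCover
    (n : ℕ) (hn : 1 ≤ n) (a : Fin n → EuclideanSpace ℝ (Fin 2))
    (R : Fin n → ℝ) (hR : ∀ i, 0 < R i)
    (w : Fin n → ℝ) (hw : ∀ i, 0 ≤ w i)
    (D : ℝ) (hD : 0 < D)
    (y : EuclideanSpace ℝ (Fin 2)) :
    ∃ z ∈ convexHull ℝ (Set.range a),
      ∑ i, w i * (volume (closedBall (a i) (R i) ∩ closedBall z D)).toReal ≥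
        ∑ i, w i * (volume (closedBall (a i) (R i) ∩ closedBall y D)).toReal :=
  exists_convexHull_point_better_areaCover_general n hn a R w hw D y
end

section
/- Let a : Fin n → E (n ≥ 1) be the demand point centers in the Euclidean plane E = EuclideanSpace ℝ (Fin 2) with radii R : Fin n → ℝ, R i > 0, and nonnegative weights w : Fin n → ℝ; let p facilities have cover radii D : Fin p → ℝ, D j > 0. Define the joint cover of a configuration Y : Fin p → E as F(Y) = ∑ i, w i * (volume(closedBall(a i, R i) ∩ ⋃ j, closedBall(Y j, D j))).toReal, and let K = convexHull ℝ (⋃ i, closedBall(a i, R i)) be the convex hull of the demand discs. Then for every configuration Y : Fin p → E there exists a configuration Z : Fin p → E with Z j ∈ K for all j and F(Z) ≥ F(Y); in particular there exists an optimal solution to the multiple facility location problem in which all facilities are located in the convex hull of the demand regions. -/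
open Metric MeasureTheory

/-!
Projecting every facility onto the compact convex hull `K` of the demand discs moves it
closer to every point of `K` (the projection makes an obtuse angle with `K`), so each disc
`closedBall (Y j) (D j)` meets `K` in a subset of the moved disc. Hence the part of each demand
disc that is covered can only grow.
-/

section ConvexHull

variable {E : Type*} [AddCommGroup E] [Module ℝ E] [FiniteDimensional ℝ E]

-- Carathéodory: a point of the hull is a convex combination of at most `finrank ℝ E + 1` points.
theorem convexHull_eq_iUnion_image_stdSimplex (s : Set E) :
    convexHull ℝ s = ⋃ k ∈ Finset.range (Module.finrank ℝ E + 2),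
      (fun q : (Fin k → ℝ) × (Fin k → E) ↦ ∑ i, q.1 i • q.2 i) ''
        (stdSimplex ℝ (Fin k) ×ˢ Set.univ.pi fun _ ↦ s) := by
  apply Set.Subset.antisymm
  · intro x hx
    obtain ⟨ι, _, z, w, hzs, hz, hw₀, hw₁, rfl⟩ := eq_pos_convex_span_of_mem_convexHull hx
    have hcard : Fintype.card ι < Module.finrank ℝ E + 2 := by
      have := Submodule.finrank_le (vectorSpan ℝ (Set.range z))
      have := hz.card_le_finrank_succ
      omega
    let e := Fintype.equivFin ι
    refine Set.mem_biUnion (Finset.mem_range.2 hcard)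
      ⟨(w ∘ e.symm, z ∘ e.symm), ⟨⟨fun i ↦ (hw₀ _).le, ?_⟩, fun i _ ↦ hzs ⟨_, rfl⟩⟩, ?_⟩
    · rw [← hw₁]
      exact e.symm.sum_comp w
    · exact e.symm.sum_comp fun i ↦ w i • z i
  · simp only [Set.iUnion_subset_iff]
    rintro k - x ⟨⟨w, z⟩, ⟨hw, hz⟩, rfl⟩
    exact (convex_convexHull ℝ s).sum_mem (fun i _ ↦ hw.1 i) hw.2
      fun i _ ↦ subset_convexHull ℝ s (hz i trivial)

variable [TopologicalSpace E] [IsTopologicalAddGroup E] [ContinuousSMul ℝ E]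

theorem IsCompact.convexHull {s : Set E} (hs : IsCompact s) : IsCompact (convexHull ℝ s) := by
  rw [convexHull_eq_iUnion_image_stdSimplex]
  exact (Finset.range _).isCompact_biUnion fun k _ ↦
    ((isCompact_stdSimplex ℝ (Fin k)).prod (isCompact_univ_pi fun _ ↦ hs)).image (by fun_prop)

end ConvexHull

theorem exists_mem_forall_dist_le_of_isComplete_convex {F : Type*} [NormedAddCommGroup F]
    [InnerProductSpace ℝ F] {K : Set F} (hK : Convex ℝ K) (hKc : IsComplete K)
    (hne : K.Nonempty) (y : F) : ∃ z ∈ K, ∀ x ∈ K, dist x z ≤ dist x y := by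
  obtain ⟨z, hzK, hz⟩ := exists_norm_eq_iInf_of_complete_convex hne hKc hK y
  refine ⟨z, hzK, fun x hx ↦ ?_⟩
  have hobtuse : inner ℝ (y - z) (x - z) ≤ 0 :=
    (norm_eq_iInf_iff_real_inner_le_zero hK hzK).1 hz x hx
  have hpyth : ‖x - y‖ ^ 2 = ‖x - z‖ ^ 2 - 2 * inner ℝ (y - z) (x - z) + ‖y - z‖ ^ 2 := by
    rw [← sub_sub_sub_cancel_right x y z, norm_sub_sq_real, real_inner_comm]
  rw [dist_eq_norm, dist_eq_norm]
  nlinarith [norm_nonneg (x - z), norm_nonneg (x - y), sq_nonneg ‖y - z‖]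

theorem inter_iUnion_closedBall_subset_of_dist_le {X ι : Type*} [PseudoMetricSpace X]
    {s : Set X} {Y Z : ι → X} (h : ∀ j, ∀ x ∈ s, dist x (Z j) ≤ dist x (Y j)) (D : ι → ℝ) :
    s ∩ ⋃ j, closedBall (Y j) (D j) ⊆ s ∩ ⋃ j, closedBall (Z j) (D j) := by
  rintro x ⟨hxs, hxY⟩
  obtain ⟨j, hj⟩ := Set.mem_iUnion.1 hxY
  exact ⟨hxs, Set.mem_iUnion.2 ⟨j, (h j x hxs).trans hj⟩⟩

theorem exists_config_in_convexHull_better_jointCover_general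
    (n : ℕ) (hn : 1 ≤ n) (a : Fin n → EuclideanSpace ℝ (Fin 2))
    (R : Fin n → ℝ) (hR : ∀ i, 0 < R i)
    (w : Fin n → ℝ) (hw : ∀ i, 0 ≤ w i)
    (p : ℕ) (D : Fin p → ℝ)
    (Y : Fin p → EuclideanSpace ℝ (Fin 2)) :
    ∃ Z : Fin p → EuclideanSpace ℝ (Fin 2),
      (∀ j, Z j ∈ convexHull ℝ (⋃ i, closedBall (a i) (R i))) ∧
      ∑ i, w i * (volume (closedBall (a i) (R i) ∩ ⋃ j, closedBall (Z j) (D j))).toReal ≥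
        ∑ i, w i * (volume (closedBall (a i) (R i) ∩ ⋃ j, closedBall (Y j) (D j))).toReal := by
  set K := convexHull ℝ (⋃ i, closedBall (a i) (R i))
  have hKc : IsComplete K :=
    (isCompact_iUnion fun i ↦ isCompact_closedBall _ _).convexHull.isComplete
  have hKne : K.Nonempty := ⟨a ⟨0, hn⟩, subset_convexHull ℝ _
    (Set.mem_iUnion.2 ⟨⟨0, hn⟩, mem_closedBall_self (hR _).le⟩)⟩
  choose Z hZK hZ using fun j ↦
    exists_mem_forall_dist_le_of_isComplete_convex (convex_convexHull ℝ _) hKc hKne (Y j)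
  refine ⟨Z, hZK, Finset.sum_le_sum fun i _ ↦ mul_le_mul_of_nonneg_left ?_ (hw i)⟩
  have hball : closedBall (a i) (R i) ⊆ K :=
    (Set.subset_iUnion (fun i ↦ closedBall (a i) (R i)) i).trans (subset_convexHull ℝ _)
  exact ENNReal.toReal_mono (measure_inter_lt_top_of_left_ne_top measure_closedBall_lt_top.ne).ne
    (measure_mono (inter_iUnion_closedBall_subset_of_dist_le (fun j x hx ↦ hZ j x (hball hx)) D))

/-- Theorem 2: for every configuration of `p` facilities there is a configuration with
all facilities in the convex hull of the demand discs whose joint cover is at least as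
large; in particular an optimal solution exists with all facilities in that convex hull. -/
theorem exists_config_in_convexHull_better_jointCover
    (n : ℕ) (hn : 1 ≤ n) (a : Fin n → EuclideanSpace ℝ (Fin 2))
    (R : Fin n → ℝ) (hR : ∀ i, 0 < R i)
    (w : Fin n → ℝ) (hw : ∀ i, 0 ≤ w i)
    (p : ℕ) (D : Fin p → ℝ) (hD : ∀ j, 0 < D j)
    (Y : Fin p → EuclideanSpace ℝ (Fin 2)) :
    ∃ Z : Fin p → EuclideanSpace ℝ (Fin 2),
      (∀ j, Z j ∈ convexHull ℝ (⋃ i, closedBall (a i) (R i))) ∧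
      ∑ i, w i * (volume (closedBall (a i) (R i) ∩ ⋃ j, closedBall (Z j) (D j))).toReal ≥
        ∑ i, w i * (volume (closedBall (a i) (R i) ∩ ⋃ j, closedBall (Y j) (D j))).toReal :=
  exists_config_in_convexHull_better_jointCover_general n hn a R hR w hw p D Y
end
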